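/- arXiv:1306.2558 — 2 statements merged into one kernel-verified Lean document; each statement's English description precedes it below -/
import Mathlib

section
/- Bayesian update with a likelihood ratio below 1 everywhere on a monotone set decreases expected similarity: let S be a finite linearly ordered set, P a pmf on S, and L : S → ℝ≥0 a likelihood that is monotone nonincreasing in s, with ∑_s L(s)P(s) > 0 and L not constant on the support of P. Then the posterior Q(s) = L(s)P(s)/∑_{s'} L(s')P(s') satisfies ∑_s s·Q(s) < ∑_s s·P(s) when S ⊆ ℝ (identifying elements with real values). -/
/-!
Writing `Z = ∑ L P`, the claim is `∑ s L P < (∑ s P) Z`, i.e. that the similarity `s` and the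
likelihood `L` have negative covariance under `P`. Twice that covariance is the symmetrized sum
`∑ₛ ∑ₜ P s P t (L t - L s) (t - s)`, whose terms are `≤ 0` because `L` is antitone and `< 0` for
the pair of support points on which `L` drops (weighted Chebyshev sum inequality).
-/

open Finset

section Chebyshev

variable {ι R : Type*} {s : Finset ι} {w f g : ι → R}

theorem sum_sum_mul_sub_mul_sub [CommRing R] :
    ∑ i ∈ s, ∑ j ∈ s, w i * w j * ((f j - f i) * (g j - g i)) =
      2 * ((∑ i ∈ s, w i) * ∑ i ∈ s, w i * (f i * g i) -
        (∑ i ∈ s, w i * f i) * ∑ i ∈ s, w i * g i) := by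
  have hdiag : ∑ i ∈ s, ∑ j ∈ s, w i * w j * (f i * g i) =
      (∑ i ∈ s, w i) * ∑ i ∈ s, w i * (f i * g i) := by
    rw [sum_mul_sum, sum_comm]; exact sum_congr rfl fun _ _ => sum_congr rfl fun _ _ => by ring
  have hdiag' : ∑ i ∈ s, ∑ j ∈ s, w i * w j * (f j * g j) =
      (∑ i ∈ s, w i) * ∑ i ∈ s, w i * (f i * g i) := by
    rw [sum_mul_sum]; exact sum_congr rfl fun _ _ => sum_congr rfl fun _ _ => by ring
  have hcross : ∑ i ∈ s, ∑ j ∈ s, w i * w j * (f i * g j) =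
      (∑ i ∈ s, w i * f i) * ∑ i ∈ s, w i * g i := by
    rw [sum_mul_sum]; exact sum_congr rfl fun _ _ => sum_congr rfl fun _ _ => by ring
  have hcross' : ∑ i ∈ s, ∑ j ∈ s, w i * w j * (f j * g i) =
      (∑ i ∈ s, w i * f i) * ∑ i ∈ s, w i * g i := by
    rw [sum_mul_sum, sum_comm]; exact sum_congr rfl fun _ _ => sum_congr rfl fun _ _ => by ring
  simp only [mul_sub, sub_mul, sum_sub_distrib, hdiag, hdiag', hcross, hcross']
  ring

theorem AntivaryOn.sum_mul_sum_lt_sum_mul_mul_sum [CommRing R] [LinearOrder R]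
    [IsStrictOrderedRing R] (hfg : AntivaryOn f g s) (hw : ∀ i ∈ s, 0 ≤ w i)
    (h : ∃ i ∈ s, ∃ j ∈ s, 0 < w i ∧ 0 < w j ∧ (f j - f i) * (g j - g i) < 0) :
    (∑ i ∈ s, w i) * ∑ i ∈ s, w i * (f i * g i) <
      (∑ i ∈ s, w i * f i) * ∑ i ∈ s, w i * g i := by
  obtain ⟨i, hi, j, hj, hwi, hwj, hij⟩ := h
  have hterm : ∀ i ∈ s, ∀ j ∈ s, w i * w j * ((f j - f i) * (g j - g i)) ≤ 0 :=
    fun i hi j hj => mul_nonpos_of_nonneg_of_nonpos (mul_nonneg (hw i hi) (hw j hj))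
      (hfg.sub_mul_sub_nonpos hi hj)
  have hneg : ∑ i ∈ s, ∑ j ∈ s, w i * w j * ((f j - f i) * (g j - g i)) < 0 :=
    sum_neg' (fun k hk => sum_nonpos (hterm k hk)) ⟨i, hi,
      sum_neg' (hterm i hi) ⟨j, hj, mul_neg_of_pos_of_neg (mul_pos hwi hwj) hij⟩⟩
  rw [sum_sum_mul_sub_mul_sub] at hneg
  linarith

end Chebyshev

theorem antitone_likelihood_decreases_mean_general
    (S : Finset ℝ)
    (P : ℝ → ℝ) (hP0 : ∀ s ∈ S, 0 ≤ P s) (hP1 : ∑ s ∈ S, P s = 1)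
    (L : ℝ → ℝ)
    (hLmono : ∀ s₁ ∈ S, ∀ s₂ ∈ S, s₁ ≤ s₂ → L s₂ ≤ L s₁)
    (hZ : 0 < ∑ s ∈ S, L s * P s)
    (hnc : ∃ s₁ ∈ S, ∃ s₂ ∈ S, s₁ < s₂ ∧ 0 < P s₁ ∧ 0 < P s₂ ∧ L s₂ < L s₁) :
    (∑ s ∈ S, s * (L s * P s / ∑ s' ∈ S, L s' * P s')) < ∑ s ∈ S, s * P s := by
  obtain ⟨s₁, hs₁, s₂, hs₂, hlt, hP₁, hP₂, hL⟩ := hnc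
  have hanti : AntivaryOn L id (S : Set ℝ) :=
    antivaryOn_id_iff.2 fun a ha b hb => hLmono a ha b hb
  have hcov := hanti.sum_mul_sum_lt_sum_mul_mul_sum hP0
    ⟨s₁, hs₁, s₂, hs₂, hP₁, hP₂, mul_neg_of_neg_of_pos (sub_neg.2 hL) (sub_pos.2 hlt)⟩
  simp only [hP1, one_mul, id] at hcov
  simp only [← mul_div_assoc]
  rw [← sum_div, div_lt_iff₀ hZ]
  calc ∑ s ∈ S, s * (L s * P s)
      = ∑ s ∈ S, P s * (L s * s) := sum_congr rfl fun _ _ => by ring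
    _ < (∑ s ∈ S, P s * L s) * ∑ s ∈ S, P s * s := hcov
    _ = (∑ s ∈ S, s * P s) * ∑ s ∈ S, L s * P s := by
      rw [mul_comm]; congr 1 <;> exact sum_congr rfl fun _ _ => mul_comm _ _

/-- Bayesian update with a nonincreasing, nonconstant-on-support likelihood
strictly decreases expected similarity: 'negative' evidence lowers the mean. -/
theorem antitone_likelihood_decreases_mean
    (S : Finset ℝ)
    (P : ℝ → ℝ) (hP0 : ∀ s ∈ S, 0 ≤ P s) (hP1 : ∑ s ∈ S, P s = 1)
    (L : ℝ → ℝ) (hL0 : ∀ s ∈ S, 0 ≤ L s)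
    (hLmono : ∀ s₁ ∈ S, ∀ s₂ ∈ S, s₁ ≤ s₂ → L s₂ ≤ L s₁)
    (hZ : 0 < ∑ s ∈ S, L s * P s)
    (hnc : ∃ s₁ ∈ S, ∃ s₂ ∈ S, s₁ < s₂ ∧ 0 < P s₁ ∧ 0 < P s₂ ∧ L s₂ < L s₁) :
    (∑ s ∈ S, s * (L s * P s / ∑ s' ∈ S, L s' * P s')) < ∑ s ∈ S, s * P s :=
  antitone_likelihood_decreases_mean_general S P hP0 hP1 L hLmono hZ hnc
end

section
/- The mass-shift relation generates exactly first-order stochastic dominance on finite chains: if P and Q are pmfs on a finite linearly ordered set S and Q is first-order stochastically dominated by P with Q ≠ P, then Q can be obtained from P by a finite sequence of mass-shift operations, each moving positive mass from some b to some a < b. -/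
/-!
Let `b` be the first point where `P` has more mass than `Q`. Since the CDF of `P` lies below that
of `Q` at `b`, some `a < b` has `P a < Q a`. Moving `δ = min (Q a - P a) (P b - Q b)` from `b` to
`a` keeps the CDF of `P` below that of `Q`: between `a` and `b` the gap is at least `Q a - P a`,
because `P ≤ Q` before `b`. The shift makes `P` agree with `Q` at `a` or at `b` without creating
new disagreements, so finitely many shifts reach `Q`.
-/

/-- A single mass-shift operation: move mass `δ > 0` from `b` down to `a < b`. -/
def MassShift {S : Type*} [LinearOrder S] (μ μ' : S → ℝ) : Prop :=
  ∃ (a b : S) (δ : ℝ), a < b ∧ 0 < δ ∧ δ ≤ μ b ∧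
    μ' a = μ a + δ ∧ μ' b = μ b - δ ∧ ∀ s, s ≠ a → s ≠ b → μ' s = μ s

namespace MassShift

open Finset

section Shift

variable {S : Type*} [LinearOrder S] (P : S → ℝ) (a b : S) (δ : ℝ)

def shift : S → ℝ := P + Pi.single a δ - Pi.single b δ

variable {P a b δ}

theorem shift_apply_left (hab : a ≠ b) : shift P a b δ a = P a + δ := by
  simp [shift, hab]

theorem shift_apply_right (hab : a ≠ b) : shift P a b δ b = P b - δ := by
  simp [shift, hab.symm]

theorem shift_apply_of_ne {s : S} (ha : s ≠ a) (hb : s ≠ b) : shift P a b δ s = P s := by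
  simp [shift, ha, hb]

theorem massShift_shift (hab : a < b) (hδ : 0 < δ) (hδb : δ ≤ P b) :
    MassShift P (shift P a b δ) :=
  ⟨a, b, δ, hab, hδ, hδb, shift_apply_left hab.ne, shift_apply_right hab.ne,
    fun _ => shift_apply_of_ne⟩

theorem sum_shift (F : Finset S) :
    ∑ s ∈ F, shift P a b δ s =
      ∑ s ∈ F, P s + (if a ∈ F then δ else 0) - (if b ∈ F then δ else 0) := by
  simp [shift, sum_add_distrib, sum_sub_distrib, sum_pi_single']

end Shift

variable {S : Type*} [Fintype S] [LinearOrder S] {P Q : S → ℝ} {a b : S} {δ : ℝ}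

def cdf (P : S → ℝ) (s₀ : S) : ℝ := ∑ s ∈ univ.filter (· ≤ s₀), P s

noncomputable def diffSet (P Q : S → ℝ) : Finset S := univ.filter fun s => P s ≠ Q s

theorem cdf_shift (s₀ : S) :
    cdf (shift P a b δ) s₀ =
      cdf P s₀ + (if a ≤ s₀ then δ else 0) - (if b ≤ s₀ then δ else 0) := by
  simp [cdf, sum_shift]

theorem exists_min_excess (hsum : ∑ s, P s = ∑ s, Q s) (hne : P ≠ Q) :
    ∃ b, Q b < P b ∧ ∀ t < b, P t ≤ Q t := by
  have hexcess : ∃ b, Q b < P b := by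
    by_contra! hle
    exact hne <| funext fun s =>
      (sum_eq_sum_iff_of_le fun s _ => hle s).1 hsum s (mem_univ s)
  obtain ⟨b, hb, hmin⟩ := wellFounded_lt.has_min {b | Q b < P b} hexcess
  exact ⟨b, hb, fun t htb => not_lt.1 fun ht => hmin t ht htb⟩

theorem exists_deficit_below (hb : Q b < P b) (hcdf : cdf P b ≤ cdf Q b) :
    ∃ a < b, P a < Q a := by
  by_contra! h
  refine hcdf.not_gt (sum_lt_sum (fun t ht => ?_) ⟨b, by simp, hb⟩)
  rcases (mem_filter.1 ht).2.lt_or_eq with htb | rfl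
  · exact h t htb
  · exact hb.le

theorem cdf_shift_le (hab : a < b) (hδ : δ ≤ Q a - P a) (hbelow : ∀ t < b, P t ≤ Q t)
    (hcdf : ∀ s₀, cdf P s₀ ≤ cdf Q s₀) (s₀ : S) : cdf (shift P a b δ) s₀ ≤ cdf Q s₀ := by
  rw [cdf_shift]
  by_cases has : a ≤ s₀
  · by_cases hbs : b ≤ s₀
    · simpa [has, hbs] using hcdf s₀
    · have hgap : Q a - P a ≤ cdf Q s₀ - cdf P s₀ := by
        rw [cdf, cdf, ← sum_sub_distrib]
        refine single_le_sum (f := fun t => Q t - P t) (fun t ht => ?_) (by simpa using has)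
        exact sub_nonneg.2 (hbelow t ((mem_filter.1 ht).2.trans_lt (not_le.1 hbs)))
      simp only [has, hbs, if_true, if_false]
      linarith
  · have hbs : ¬b ≤ s₀ := fun hbs => has (hab.le.trans hbs)
    simpa [has, hbs] using hcdf s₀

theorem diffSet_shift_ssubset (ha : P a ≠ Q a) (hb : P b ≠ Q b)
    (hfix : shift P a b δ a = Q a ∨ shift P a b δ b = Q b) :
    diffSet (shift P a b δ) Q ⊂ diffSet P Q := by
  have hsub : diffSet (shift P a b δ) Q ⊆ diffSet P Q := by
    intro s hs
    simp only [diffSet, mem_filter, mem_univ, true_and] at hs ⊢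
    by_cases hsa : s = a
    · exact hsa ▸ ha
    by_cases hsb : s = b
    · exact hsb ▸ hb
    rwa [shift_apply_of_ne hsa hsb] at hs
  rcases hfix with hfix | hfix
  · exact (ssubset_iff_of_subset hsub).2 ⟨a, by simpa [diffSet] using ha, by simpa [diffSet]⟩
  · exact (ssubset_iff_of_subset hsub).2 ⟨b, by simpa [diffSet] using hb, by simpa [diffSet]⟩

theorem exists_massShift_diffSet_ssubset (hQ0 : ∀ s, 0 ≤ Q s)
    (hsum : ∑ s, P s = ∑ s, Q s) (hcdf : ∀ s₀, cdf P s₀ ≤ cdf Q s₀) (hne : P ≠ Q) :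
    ∃ P', MassShift P P' ∧ ∑ s, P' s = ∑ s, Q s ∧ (∀ s₀, cdf P' s₀ ≤ cdf Q s₀) ∧
      diffSet P' Q ⊂ diffSet P Q := by
  obtain ⟨b, hb, hbelow⟩ := exists_min_excess hsum hne
  obtain ⟨a, hab, ha⟩ := exists_deficit_below hb (hcdf b)
  set δ := min (Q a - P a) (P b - Q b) with hδ
  have hδpos : 0 < δ := lt_min (sub_pos.2 ha) (sub_pos.2 hb)
  have hδb : δ ≤ P b - Q b := min_le_right _ _
  have hfix : shift P a b δ a = Q a ∨ shift P a b δ b = Q b := by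
    rw [shift_apply_left hab.ne, shift_apply_right hab.ne]
    rcases min_choice (Q a - P a) (P b - Q b) with h | h
    · left; rw [hδ, h]; ring
    · right; rw [hδ, h]; ring
  refine ⟨shift P a b δ, massShift_shift hab hδpos (by linarith [hQ0 b]), ?_,
    cdf_shift_le hab (min_le_left _ _) hbelow hcdf, diffSet_shift_ssubset ha.ne hb.ne' hfix⟩
  simp [sum_shift, hsum]

theorem reflTransGen_of_cdf_le (hQ0 : ∀ s, 0 ≤ Q s) (P : S → ℝ)
    (hsum : ∑ s, P s = ∑ s, Q s) (hcdf : ∀ s₀, cdf P s₀ ≤ cdf Q s₀) :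
    Relation.ReflTransGen MassShift P Q := by
  by_cases hne : P = Q
  · exact hne ▸ .refl
  obtain ⟨P', hstep, hsum', hcdf', hlt⟩ := exists_massShift_diffSet_ssubset hQ0 hsum hcdf hne
  exact .head hstep (reflTransGen_of_cdf_le hQ0 P' hsum' hcdf')
termination_by (diffSet P Q).card
decreasing_by exact card_lt_card hlt

end MassShift

theorem stochastic_dominance_implies_mass_shifts_general
    {S : Type*} [Fintype S] [LinearOrder S]
    (P Q : S → ℝ)
    (hP1 : ∑ s, P s = 1)
    (hQ0 : ∀ s, 0 ≤ Q s) (hQ1 : ∑ s, Q s = 1)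
    (hdom : ∀ s₀ : S, (∑ s ∈ Finset.univ.filter (· ≤ s₀), P s)
      ≤ ∑ s ∈ Finset.univ.filter (· ≤ s₀), Q s) :
    Relation.ReflTransGen MassShift P Q :=
  MassShift.reflTransGen_of_cdf_le hQ0 P (hP1.trans hQ1.symm) hdom

/-- Converse characterization: on a finite chain, if `Q` is first-order
stochastically dominated by `P` and `Q ≠ P`, then `Q` is obtained from `P` by a
finite sequence of downward mass shifts. -/
theorem stochastic_dominance_implies_mass_shifts
    {S : Type*} [Fintype S] [LinearOrder S]
    (P Q : S → ℝ)
    (hP0 : ∀ s, 0 ≤ P s) (hP1 : ∑ s, P s = 1)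
    (hQ0 : ∀ s, 0 ≤ Q s) (hQ1 : ∑ s, Q s = 1)
    (hdom : ∀ s₀ : S, (∑ s ∈ Finset.univ.filter (· ≤ s₀), P s)
      ≤ ∑ s ∈ Finset.univ.filter (· ≤ s₀), Q s)
    (hne : Q ≠ P) :
    Relation.ReflTransGen MassShift P Q :=
  stochastic_dominance_implies_mass_shifts_general P Q hP1 hQ0 hQ1 hdom
end
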